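/- arXiv:2306.02047 — 4 statements merged into one kernel-verified Lean document; each statement's English description precedes it below -/
import Mathlib

section
/- Let H ∈ (1/2,1), T>0, n ∈ ℕ, and f ∈ L²([0,T];ℝⁿ). Then H(2H−1) ∫_0^T ∫_0^T |t−s|^{2H−2} ⟨f(s), f(t)⟩ ds dt ≤ 2H T^{2H−1} ∫_0^T |f(t)|² dt, where ⟨·,·⟩ and |·| denote the Euclidean inner product and norm on ℝⁿ. -/
/-!
Schur test for the symmetric kernel `K t s = |t - s| ^ (2H - 2)`: Cauchy–Schwarz and AM–GM give
`|K t s ⟪f s, f t⟫| ≤ K t s (‖f s‖² + ‖f t‖²) / 2`, and by symmetry of `K` both halves integrate to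
`∫ (∫ K t s ds) ‖f t‖² dt`. The row integral `∫₀ᵀ |t - s| ^ (2H - 2) ds` equals
`(t ^ (2H - 1) + (T - t) ^ (2H - 1)) / (2H - 1) ≤ 2 T ^ (2H - 1) / (2H - 1)`.
-/

open MeasureTheory Set Function

section PowerKernel

variable {r : ℝ}

lemma intervalIntegrable_abs_rpow_of_nonneg (hr : -1 < r) {b : ℝ} (hb : 0 ≤ b) :
    IntervalIntegrable (fun x => |x| ^ r) volume 0 b :=
  (intervalIntegral.intervalIntegrable_rpow' hr).congr fun x hx => by
    rw [uIoc_of_le hb] at hx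
    simp only [abs_of_pos hx.1]

lemma integral_abs_rpow_of_nonneg (hr : -1 < r) {b : ℝ} (hb : 0 ≤ b) :
    ∫ x in 0..b, |x| ^ r = b ^ (r + 1) / (r + 1) := by
  have habs : EqOn (fun x => |x| ^ r) (fun x => x ^ r) (uIcc 0 b) := fun x hx => by
    rw [uIcc_of_le hb] at hx
    simp only [abs_of_nonneg hx.1]
  rw [intervalIntegral.integral_congr habs, integral_rpow (Or.inl hr),
    Real.zero_rpow (by linarith), sub_zero]

variable {a b t : ℝ}

lemma intervalIntegrable_abs_sub_rpow (hr : -1 < r) (ht : t ∈ Icc a b) :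
    IntervalIntegrable (fun s => |t - s| ^ r) volume a b := by
  have hleft := (intervalIntegrable_abs_rpow_of_nonneg hr (sub_nonneg.2 ht.1)).comp_sub_left t
  have hright := (intervalIntegrable_abs_rpow_of_nonneg hr (sub_nonneg.2 ht.2)).comp_sub_right t
  simp only [sub_zero, sub_sub_cancel, zero_add, sub_add_cancel] at hleft hright
  exact hleft.symm.trans (hright.congr fun s _ => by simp only [abs_sub_comm])

lemma integral_abs_sub_rpow (hr : -1 < r) (ht : t ∈ Icc a b) :
    ∫ s in a..b, |t - s| ^ r = ((t - a) ^ (r + 1) + (b - t) ^ (r + 1)) / (r + 1) := by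
  have hint := intervalIntegrable_abs_sub_rpow hr ht
  rw [← intervalIntegral.integral_add_adjacent_intervals
      (hint.mono_set (uIcc_subset_uIcc_left (Icc_subset_uIcc ht)))
      (hint.mono_set (uIcc_subset_uIcc_right (Icc_subset_uIcc ht)))]
  have hleft : ∫ s in a..t, |t - s| ^ r = (t - a) ^ (r + 1) / (r + 1) := by
    rw [intervalIntegral.integral_comp_sub_left (fun x => |x| ^ r), sub_self,
      integral_abs_rpow_of_nonneg hr (sub_nonneg.2 ht.1)]
  have hright : ∫ s in t..b, |t - s| ^ r = (b - t) ^ (r + 1) / (r + 1) := by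
    simp_rw [abs_sub_comm t]
    rw [intervalIntegral.integral_comp_sub_right (fun x => |x| ^ r), sub_self,
      integral_abs_rpow_of_nonneg hr (sub_nonneg.2 ht.2)]
  rw [hleft, hright, add_div]

lemma integral_abs_sub_rpow_le (hr : -1 < r) {T : ℝ} (ht : t ∈ Icc 0 T) :
    ∫ s in 0..T, |t - s| ^ r ≤ 2 * T ^ (r + 1) / (r + 1) := by
  have hr1 : 0 < r + 1 := by linarith
  rw [integral_abs_sub_rpow hr ht, two_mul, sub_zero]
  gcongr
  · exact ht.1
  · exact ht.2
  · linarith [ht.2]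
  · linarith [ht.1]

end PowerKernel

section SymmetricKernel

variable {α E : Type*} [MeasurableSpace α] {μ : Measure α} [SFinite μ]
  [NormedAddCommGroup E] [InnerProductSpace ℝ E]
  {K : α → α → ℝ} {B : ℝ}

lemma integrable_kernel_mul_of_integral_le {φ : α → ℝ}
    (hK : AEStronglyMeasurable (uncurry K) (μ.prod μ)) (hK0 : ∀ t s, 0 ≤ K t s)
    (hKB : ∀ᵐ t ∂μ, Integrable (K t) μ ∧ ∫ s, K t s ∂μ ≤ B) (hφ : Integrable φ μ) :
    Integrable (fun p : α × α => K p.1 p.2 * φ p.1) (μ.prod μ) := by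
  have hm : AEStronglyMeasurable (fun p : α × α => K p.1 p.2 * φ p.1) (μ.prod μ) :=
    hK.mul hφ.1.comp_fst
  refine (integrable_prod_iff hm).2 ⟨?_, ?_⟩
  · filter_upwards [hKB] with t ht using ht.1.mul_const _
  · refine (hφ.norm.const_mul B).mono' hm.norm.integral_prod_right' ?_
    filter_upwards [hKB] with t ht
    simp only [norm_mul, Real.norm_of_nonneg (hK0 _ _), integral_mul_const, norm_norm,
      Real.norm_of_nonneg (integral_nonneg (hK0 t))]
    exact mul_le_mul_of_nonneg_right ht.2 (norm_nonneg _)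

lemma integral_kernel_mul_le {φ : α → ℝ}
    (hK : AEStronglyMeasurable (uncurry K) (μ.prod μ)) (hK0 : ∀ t s, 0 ≤ K t s)
    (hKB : ∀ᵐ t ∂μ, Integrable (K t) μ ∧ ∫ s, K t s ∂μ ≤ B) (hφ : Integrable φ μ)
    (hφ0 : 0 ≤ φ) :
    ∫ p, K p.1 p.2 * φ p.1 ∂(μ.prod μ) ≤ B * ∫ t, φ t ∂μ := by
  have hg := integrable_kernel_mul_of_integral_le hK hK0 hKB hφ
  rw [integral_prod _ hg, ← integral_const_mul]
  refine integral_mono_ae hg.integral_prod_left (hφ.const_mul B) ?_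
  filter_upwards [hKB] with t ht
  rw [integral_mul_const]
  exact mul_le_mul_of_nonneg_right ht.2 (hφ0 t)

lemma abs_inner_le_half_add_sq (x y : E) : |inner ℝ x y| ≤ (‖x‖ ^ 2 + ‖y‖ ^ 2) / 2 := by
  nlinarith [abs_real_inner_le_norm x y, sq_nonneg (‖x‖ - ‖y‖)]

theorem integral_integral_kernel_mul_inner_le {f : α → E}
    (hK : AEStronglyMeasurable (uncurry K) (μ.prod μ)) (hK0 : ∀ t s, 0 ≤ K t s)
    (hK_symm : ∀ t s, K t s = K s t)
    (hKB : ∀ᵐ t ∂μ, Integrable (K t) μ ∧ ∫ s, K t s ∂μ ≤ B) (hf : MemLp f 2 μ) :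
    ∫ t, ∫ s, K t s * inner ℝ (f s) (f t) ∂μ ∂μ ≤ B * ∫ t, ‖f t‖ ^ 2 ∂μ := by
  set g : α × α → ℝ := fun p => K p.1 p.2 * ‖f p.1‖ ^ 2
  have hφ : Integrable (fun t => ‖f t‖ ^ 2) μ := hf.integrable_norm_pow two_ne_zero
  have hg : Integrable g (μ.prod μ) := integrable_kernel_mul_of_integral_le hK hK0 hKB hφ
  have hg_swap : Integrable (fun p => g p.swap) (μ.prod μ) := hg.swap
  have hbound (p : α × α) : |K p.1 p.2 * inner ℝ (f p.2) (f p.1)| ≤ (g p + g p.swap) / 2 := by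
    simp only [g, Prod.fst_swap, Prod.snd_swap, hK_symm p.2 p.1, abs_mul, abs_of_nonneg (hK0 _ _)]
    nlinarith [abs_inner_le_half_add_sq (f p.2) (f p.1), hK0 p.1 p.2]
  have hΦ : Integrable (uncurry fun t s => K t s * inner ℝ (f s) (f t)) (μ.prod μ) :=
    ((hg.add hg_swap).div_const 2).mono' (hK.mul (hf.1.comp_snd.inner hf.1.comp_fst))
      (.of_forall hbound)
  calc ∫ t, ∫ s, K t s * inner ℝ (f s) (f t) ∂μ ∂μ
      = ∫ p, K p.1 p.2 * inner ℝ (f p.2) (f p.1) ∂(μ.prod μ) := integral_integral hΦ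
    _ ≤ ∫ p, (g p + g p.swap) / 2 ∂(μ.prod μ) :=
        integral_mono hΦ ((hg.add hg_swap).div_const 2) fun p => (le_abs_self _).trans (hbound p)
    _ = ∫ p, g p ∂(μ.prod μ) := by
        rw [integral_div, integral_add hg hg_swap, integral_prod_swap]; ring
    _ ≤ B * ∫ t, ‖f t‖ ^ 2 ∂μ := integral_kernel_mul_le hK hK0 hKB hφ fun _ => by positivity

end SymmetricKernel

theorem cameronMartin_norm_le_L2_general
    (H T : ℝ) (n : ℕ) (hH : 1 / 2 < H)
    (f : ℝ → EuclideanSpace ℝ (Fin n))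
    (hf : MemLp f 2 (volume.restrict (Ioc (0:ℝ) T))) :
    H * (2 * H - 1) *
        ∫ t in Ioc (0:ℝ) T, ∫ s in Ioc (0:ℝ) T,
          |t - s| ^ (2 * H - 2) * (inner ℝ (f s) (f t) : ℝ)
      ≤ 2 * H * T ^ (2 * H - 1) * ∫ t in Ioc (0:ℝ) T, ‖f t‖ ^ 2 := by
  have hr : -1 < 2 * H - 2 := by linarith
  have hkernel : ∀ᵐ t ∂(volume.restrict (Ioc (0:ℝ) T)),
      IntegrableOn (fun s => |t - s| ^ (2 * H - 2)) (Ioc 0 T) ∧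
        ∫ s in Ioc (0:ℝ) T, |t - s| ^ (2 * H - 2) ≤ 2 * T ^ (2 * H - 1) / (2 * H - 1) := by
    filter_upwards [ae_restrict_mem measurableSet_Ioc] with t ht
    have hT : 0 ≤ T := ht.1.le.trans ht.2
    rw [← intervalIntegrable_iff_integrableOn_Ioc_of_le hT, ← intervalIntegral.integral_of_le hT]
    refine ⟨intervalIntegrable_abs_sub_rpow hr (Ioc_subset_Icc_self ht), ?_⟩
    have hexp : 2 * H - 2 + 1 = 2 * H - 1 := by ring
    simpa only [hexp] using integral_abs_sub_rpow_le hr (Ioc_subset_Icc_self ht)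
  have hK : AEStronglyMeasurable (uncurry fun t s : ℝ => |t - s| ^ (2 * H - 2))
      ((volume.restrict (Ioc (0:ℝ) T)).prod (volume.restrict (Ioc (0:ℝ) T))) :=
    ((measurable_fst.sub measurable_snd).abs.pow_const _).aestronglyMeasurable
  have hschur := integral_integral_kernel_mul_inner_le hK (fun _ _ => by positivity)
    (fun t s => by rw [abs_sub_comm]) hkernel hf
  calc H * (2 * H - 1) * ∫ t in Ioc (0:ℝ) T, ∫ s in Ioc (0:ℝ) T,
          |t - s| ^ (2 * H - 2) * (inner ℝ (f s) (f t) : ℝ)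
      ≤ H * (2 * H - 1) * (2 * T ^ (2 * H - 1) / (2 * H - 1) * ∫ t in Ioc (0:ℝ) T, ‖f t‖ ^ 2) :=
        mul_le_mul_of_nonneg_left hschur (by nlinarith)
    _ = 2 * H * T ^ (2 * H - 1) * ∫ t in Ioc (0:ℝ) T, ‖f t‖ ^ 2 := by
        have hcancel := mul_div_cancel₀ (2 * T ^ (2 * H - 1)) (by linarith : 2 * H - 1 ≠ 0)
        linear_combination (H * ∫ t in Ioc (0:ℝ) T, ‖f t‖ ^ 2) * hcancel

/-- The Cameron–Martin norm of fractional Brownian motion with Hurst index `H ∈ (1/2,1)` is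
dominated by the `L²` norm: for `f ∈ L²([0,T];ℝⁿ)`,
`H(2H−1) ∫₀ᵀ ∫₀ᵀ |t−s|^{2H−2} ⟨f(s),f(t)⟩ ds dt ≤ 2H T^{2H−1} ∫₀ᵀ |f(t)|² dt`. -/
theorem cameronMartin_norm_le_L2
    (H T : ℝ) (n : ℕ) (hH : 1 / 2 < H) (hH1 : H < 1) (hT : 0 < T)
    (f : ℝ → EuclideanSpace ℝ (Fin n))
    (hf : MemLp f 2 (volume.restrict (Ioc (0:ℝ) T))) :
    H * (2 * H - 1) *
        ∫ t in Ioc (0:ℝ) T, ∫ s in Ioc (0:ℝ) T,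
          |t - s| ^ (2 * H - 2) * (inner ℝ (f s) (f t) : ℝ)
      ≤ 2 * H * T ^ (2 * H - 1) * ∫ t in Ioc (0:ℝ) T, ‖f t‖ ^ 2 :=
  cameronMartin_norm_le_L2_general H T n hH f hf
end

section
/- Let H ∈ (1/2,1), T>0, n ∈ ℕ and û ∈ L²([0,T];ℝⁿ), and define u(t) = ∫_0^t K_H(t,s) û(s) ds for t ∈ [0,T]. Then u is absolutely continuous on [0,T] and for almost every t ∈ [0,T] its derivative is given by u′(t) = C_H t^{H−1/2} ∫_0^t (t−s)^{H−3/2} s^{1/2−H} û(s) ds; equivalently, u(t) = ∫_0^t (K̇_H û)(r) dr for all t ∈ [0,T]. -/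
open MeasureTheory Set

/-- The Beta function, `B(a,b) = Γ(a)Γ(b)/Γ(a+b)`. -/
noncomputable def realBeta (a b : ℝ) : ℝ :=
  Real.Gamma a * Real.Gamma b / Real.Gamma (a + b)

/-- The normalizing constant `C_H = √(H(2H−1)/B(2−2H, H−1/2))`. -/
noncomputable def CH (H : ℝ) : ℝ :=
  Real.sqrt (H * (2 * H - 1) / realBeta (2 - 2 * H) (H - 1 / 2))

/-- The kernel `K_H(t,s) = C_H s^{1/2−H} ∫_s^t (u−s)^{H−3/2} u^{H−1/2} du` for `s < t`,
and `K_H(t,s) = 0` for `s ≥ t`. -/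
noncomputable def KH (H t s : ℝ) : ℝ :=
  if s < t then
    CH H * s ^ ((1:ℝ) / 2 - H) * ∫ u in s..t, (u - s) ^ (H - 3 / 2) * u ^ (H - 1 / 2)
  else 0

/-- The "derivative" `K̇_H` of the operator `K_H`:
`(K̇_H f)(t) = C_H t^{H−1/2} ∫_0^t (t−s)^{H−3/2} s^{1/2−H} f(s) ds`. -/
noncomputable def dotKH {n : ℕ} (H : ℝ) (f : ℝ → EuclideanSpace ℝ (Fin n)) (t : ℝ) :
    EuclideanSpace ℝ (Fin n) :=
  (CH H * t ^ (H - 1 / 2)) • ∫ s in (0:ℝ)..t, ((t - s) ^ (H - 3 / 2) * s ^ ((1:ℝ) / 2 - H)) • f s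

/-!
Since `∂K_H(r,s)/∂r = C_H r^{H−1/2} (r−s)^{H−3/2} s^{1/2−H}` (`KHDeriv`) and `K_H(s,s) = 0`,
we have `K_H(t,s) = ∫_s^t ∂K_H(r,s)/∂r dr`, and `u(t) = ∫_0^t K̇_H û` is Fubini's theorem on the
triangle `0 < s < r < t`. The swap is justified because `∫_s^t ∂K_H(r,s)/∂r dr ≤ C s^{1/2−H}`,
which is square integrable exactly when `H < 1`, so Cauchy–Schwarz against `û ∈ L²` makes the
double integral absolutely convergent. The a.e. derivative is then Lebesgue's differentiation
theorem for the integrable `K̇_H û`.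
-/

lemma intervalIntegrable_sub_rpow {p : ℝ} (hp : -1 < p) (a b c : ℝ) :
    IntervalIntegrable (fun r => (r - c) ^ p) volume a b := by
  simpa using
    (intervalIntegral.intervalIntegrable_rpow' hp (a := a - c) (b := b - c)).comp_sub_right c

lemma integral_sub_rpow {p : ℝ} (hp : -1 < p) (s t : ℝ) :
    ∫ r in s..t, (r - s) ^ p = (t - s) ^ (p + 1) / (p + 1) := by
  rw [intervalIntegral.integral_comp_sub_right (fun x => x ^ p), sub_self,
    integral_rpow (Or.inl hp), Real.zero_rpow (by linarith), sub_zero]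

lemma memLp_two_rpow_Ioc {p : ℝ} (hp : -1 < 2 * p) (t : ℝ) :
    MemLp (fun s : ℝ => s ^ p) 2 (volume.restrict (Ioc 0 t)) := by
  rw [memLp_two_iff_integrable_sq (by fun_prop)]
  refine ((intervalIntegral.intervalIntegrable_rpow' hp (a := 0) (b := t)).1).congr_fun
    (fun s hs => ?_) measurableSet_Ioc
  simp only [mul_comm (2:ℝ), Real.rpow_mul hs.1.le, Real.rpow_two]

section Volterra

variable {E : Type*} [NormedAddCommGroup E] [NormedSpace ℝ E]

noncomputable def volterraIntegrand (k : ℝ → ℝ → ℝ) (f : ℝ → E) (r s : ℝ) : E :=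
  if s < r then k r s • f s else 0

variable {k : ℝ → ℝ → ℝ} {f : ℝ → E} {t : ℝ}

lemma volterraIntegrand_eq_indicator_Iio (r : ℝ) :
    (fun s => volterraIntegrand k f r s) = (Iio r).indicator (fun s => k r s • f s) := by
  ext s; simp only [volterraIntegrand, indicator, mem_Iio]

lemma volterraIntegrand_eq_indicator_Ioi (s : ℝ) :
    (fun r => volterraIntegrand k f r s) = (Ioi s).indicator (fun r => k r s • f s) := by
  ext r; simp only [volterraIntegrand, indicator, mem_Ioi]

lemma setIntegral_volterraIntegrand_fst {r : ℝ} (hr : r ∈ Ioc 0 t) :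
    ∫ s in Ioc 0 t, volterraIntegrand k f r s = ∫ s in 0..r, k r s • f s := by
  have hset : Ioc 0 t ∩ Iio r = Ioo 0 r := by
    ext s
    simp only [mem_inter_iff, mem_Ioc, mem_Iio, mem_Ioo]
    exact ⟨fun h => ⟨h.1.1, h.2⟩, fun h => ⟨⟨h.1, h.2.le.trans hr.2⟩, h.2⟩⟩
  rw [volterraIntegrand_eq_indicator_Iio, setIntegral_indicator measurableSet_Iio, hset,
    intervalIntegral.integral_of_le hr.1.le, integral_Ioc_eq_integral_Ioo]

lemma setIntegral_volterraIntegrand_snd [CompleteSpace E] {s : ℝ} (hs : s ∈ Ioc 0 t) :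
    ∫ r in Ioc 0 t, volterraIntegrand k f r s = (∫ r in s..t, k r s) • f s := by
  rw [volterraIntegrand_eq_indicator_Ioi, setIntegral_indicator measurableSet_Ioi,
    Ioc_inter_Ioi, max_eq_right hs.1.le, integral_smul_const,
    intervalIntegral.integral_of_le hs.2]

lemma norm_volterraIntegrand {r s : ℝ} (hk : s < r → 0 ≤ k r s) :
    ‖volterraIntegrand k f r s‖ = volterraIntegrand k (fun s => ‖f s‖) r s := by
  unfold volterraIntegrand
  split_ifs with hsr
  · rw [norm_smul, Real.norm_of_nonneg (hk hsr), smul_eq_mul]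
  · exact norm_zero

lemma integrableOn_volterraIntegrand [CompleteSpace E] (hk : Measurable (Function.uncurry k))
    (hk_nonneg : ∀ s ∈ Ioc 0 t, ∀ r ∈ Ioc s t, 0 ≤ k r s)
    (hk_int : ∀ s ∈ Ioc 0 t, IntervalIntegrable (k · s) volume s t)
    (hf : AEStronglyMeasurable f (volume.restrict (Ioc 0 t)))
    {g : ℝ → ℝ} (hg : ∀ s ∈ Ioc 0 t, ∫ r in s..t, k r s ≤ g s)
    (hgf : IntegrableOn (fun s => g s * ‖f s‖) (Ioc 0 t)) :
    IntegrableOn (Function.uncurry (volterraIntegrand k f)) (Ioc 0 t ×ˢ Ioc 0 t) := by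
  rw [IntegrableOn, Measure.volume_eq_prod, ← Measure.prod_restrict]
  have hmeas : AEStronglyMeasurable (Function.uncurry (volterraIntegrand k f))
      ((volume.restrict (Ioc 0 t)).prod (volume.restrict (Ioc 0 t))) := by
    have hform : Function.uncurry (volterraIntegrand k f) =
        fun p => (if p.2 < p.1 then k p.1 p.2 else 0) • f p.2 := by
      ext p; simp only [Function.uncurry, volterraIntegrand]; split_ifs <;> simp
    rw [hform]
    exact (Measurable.ite (measurableSet_lt measurable_snd measurable_fst) hk
      measurable_const).aestronglyMeasurable.smul hf.comp_snd
  refine (integrable_prod_iff' hmeas).2 ⟨?_, ?_⟩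
  · filter_upwards [ae_restrict_mem measurableSet_Ioc] with s hs
    change Integrable (fun r => volterraIntegrand k f r s) _
    rw [volterraIntegrand_eq_indicator_Ioi, integrable_indicator_iff measurableSet_Ioi,
      IntegrableOn, Measure.restrict_restrict measurableSet_Ioi, inter_comm, Ioc_inter_Ioi,
      max_eq_right hs.1.le, ← IntegrableOn]
    exact (hk_int s hs).1.smul_const (f s)
  · refine hgf.mono' (hmeas.norm.prod_swap.integral_prod_right') ?_
    filter_upwards [ae_restrict_mem measurableSet_Ioc] with s hs
    have hnorm : ∫ r in Ioc 0 t, ‖volterraIntegrand k f r s‖ = (∫ r in s..t, k r s) * ‖f s‖ := by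
      rw [setIntegral_congr_fun measurableSet_Ioc fun r hr =>
          norm_volterraIntegrand fun hsr => hk_nonneg s hs r ⟨hsr, hr.2⟩,
        setIntegral_volterraIntegrand_snd hs, smul_eq_mul]
    change ‖∫ r in Ioc 0 t, ‖volterraIntegrand k f r s‖‖ ≤ _
    rw [Real.norm_of_nonneg (integral_nonneg fun r => norm_nonneg _), hnorm]
    exact mul_le_mul_of_nonneg_right (hg s hs) (norm_nonneg _)

lemma integral_volterra_swap [CompleteSpace E] (ht : 0 ≤ t)
    (hint : IntegrableOn (Function.uncurry (volterraIntegrand k f)) (Ioc 0 t ×ˢ Ioc 0 t)) :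
    ∫ s in 0..t, (∫ r in s..t, k r s) • f s = ∫ r in 0..t, ∫ s in 0..r, k r s • f s := by
  have hswap := intervalIntegral_intervalIntegral_swap (by rwa [uIoc_of_le ht])
  simp only [intervalIntegral.integral_of_le ht] at hswap ⊢
  rw [setIntegral_congr_fun measurableSet_Ioc fun r hr =>
      (setIntegral_volterraIntegrand_fst hr).symm,
    setIntegral_congr_fun measurableSet_Ioc fun s hs =>
      (setIntegral_volterraIntegrand_snd hs).symm]
  exact hswap.symm

lemma intervalIntegrable_volterra (ht : 0 ≤ t)
    (hint : IntegrableOn (Function.uncurry (volterraIntegrand k f)) (Ioc 0 t ×ˢ Ioc 0 t)) :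
    IntervalIntegrable (fun r => ∫ s in 0..r, k r s • f s) volume 0 t := by
  rw [IntegrableOn, Measure.volume_eq_prod, ← Measure.prod_restrict] at hint
  rw [intervalIntegrable_iff_integrableOn_Ioc_of_le ht]
  exact IntegrableOn.congr_fun (μ := volume) hint.integral_prod_left
    (fun r hr => setIntegral_volterraIntegrand_fst hr) measurableSet_Ioc

end Volterra

noncomputable def KHDeriv (H r s : ℝ) : ℝ :=
  CH H * r ^ (H - 1 / 2) * ((r - s) ^ (H - 3 / 2) * s ^ ((1:ℝ) / 2 - H))

section KHDeriv

variable {H r s t : ℝ}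

lemma measurable_KHDeriv (H : ℝ) : Measurable (Function.uncurry (KHDeriv H)) := by
  unfold Function.uncurry KHDeriv; fun_prop

lemma KHDeriv_nonneg (hs : 0 ≤ s) (hsr : s ≤ r) : 0 ≤ KHDeriv H r s :=
  mul_nonneg (mul_nonneg (Real.sqrt_nonneg _) (Real.rpow_nonneg (hs.trans hsr) _))
    (mul_nonneg (Real.rpow_nonneg (sub_nonneg.2 hsr) _) (Real.rpow_nonneg hs _))

lemma KH_eq_integral_KHDeriv (hst : s ≤ t) : KH H t s = ∫ r in s..t, KHDeriv H r s := by
  rcases hst.lt_or_eq with hst | rfl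
  · rw [KH, if_pos hst, ← intervalIntegral.integral_const_mul]
    congr 1; ext r; unfold KHDeriv; ring
  · simp [KH]

lemma dotKH_eq_integral_KHDeriv {n : ℕ} (f : ℝ → EuclideanSpace ℝ (Fin n)) (r : ℝ) :
    dotKH H f r = ∫ s in 0..r, KHDeriv H r s • f s := by
  simp only [dotKH, KHDeriv, ← intervalIntegral.integral_smul, smul_smul]

lemma intervalIntegrable_KHDeriv (hH : 1 / 2 < H) (s t : ℝ) :
    IntervalIntegrable (KHDeriv H · s) volume s t := by
  have hfactor : (KHDeriv H · s) =
      fun r => CH H * s ^ ((1:ℝ) / 2 - H) * (r ^ (H - 1 / 2) * (r - s) ^ (H - 3 / 2)) := by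
    ext r; unfold KHDeriv; ring
  rw [hfactor]
  refine ((intervalIntegrable_sub_rpow (by linarith) s t s).continuousOn_mul ?_).const_mul _
  exact (Real.continuous_rpow_const (by linarith)).continuousOn

lemma integral_KHDeriv_le (hH : 1 / 2 < H) (hs : 0 < s) (hst : s ≤ t) :
    ∫ r in s..t, KHDeriv H r s ≤
      CH H * t ^ (H - 1 / 2) * (t ^ (H - 1 / 2) / (H - 1 / 2)) * s ^ ((1:ℝ) / 2 - H) := by
  calc ∫ r in s..t, KHDeriv H r s
      ≤ ∫ r in s..t, CH H * t ^ (H - 1 / 2) * s ^ ((1:ℝ) / 2 - H) * (r - s) ^ (H - 3 / 2) := by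
        refine intervalIntegral.integral_mono_on hst (intervalIntegrable_KHDeriv hH s t)
          ((intervalIntegrable_sub_rpow (by linarith) s t s).const_mul _) fun r hr => ?_
        have hrt : r ^ (H - 1 / 2) ≤ t ^ (H - 1 / 2) :=
          Real.rpow_le_rpow (hs.le.trans hr.1) hr.2 (by linarith)
        have hrest : 0 ≤ CH H * ((r - s) ^ (H - 3 / 2) * s ^ ((1:ℝ) / 2 - H)) :=
          mul_nonneg (Real.sqrt_nonneg _)
            (mul_nonneg (Real.rpow_nonneg (sub_nonneg.2 hr.1) _) (Real.rpow_nonneg hs.le _))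
        unfold KHDeriv
        nlinarith
    _ = CH H * t ^ (H - 1 / 2) * s ^ ((1:ℝ) / 2 - H) * ((t - s) ^ (H - 1 / 2) / (H - 1 / 2)) := by
        rw [intervalIntegral.integral_const_mul, integral_sub_rpow (by linarith),
          show H - 3 / 2 + 1 = H - 1 / 2 by ring]
    _ ≤ CH H * t ^ (H - 1 / 2) * s ^ ((1:ℝ) / 2 - H) * (t ^ (H - 1 / 2) / (H - 1 / 2)) := by
        have hc : 0 ≤ CH H * t ^ (H - 1 / 2) * s ^ ((1:ℝ) / 2 - H) :=
          mul_nonneg (mul_nonneg (Real.sqrt_nonneg _) (Real.rpow_nonneg (hs.le.trans hst) _))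
            (Real.rpow_nonneg hs.le _)
        gcongr
        linarith
    _ = _ := by ring

end KHDeriv

section CameronMartin

variable {H t : ℝ} {n : ℕ} {f : ℝ → EuclideanSpace ℝ (Fin n)}

lemma integrableOn_volterraIntegrand_KHDeriv (hH : 1 / 2 < H) (hH1 : H < 1)
    (hf : MemLp f 2 (volume.restrict (Ioc 0 t))) :
    IntegrableOn (Function.uncurry (volterraIntegrand (KHDeriv H) f)) (Ioc 0 t ×ˢ Ioc 0 t) := by
  have hmajorant : IntegrableOn
      (fun s => CH H * t ^ (H - 1 / 2) * (t ^ (H - 1 / 2) / (H - 1 / 2)) * s ^ ((1:ℝ) / 2 - H)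
        * ‖f s‖) (Ioc 0 t) := by
    simp_rw [mul_assoc _ (_ ^ _)]
    exact ((memLp_two_rpow_Ioc (by linarith) t).integrable_mul hf.norm).const_mul _
  exact integrableOn_volterraIntegrand (measurable_KHDeriv H)
    (fun s hs r hr => KHDeriv_nonneg hs.1.le hr.1.le) (fun s _ => intervalIntegrable_KHDeriv hH s t)
    hf.1 (fun s hs => integral_KHDeriv_le hH hs.1 hs.2) hmajorant

lemma intervalIntegrable_dotKH (hH : 1 / 2 < H) (hH1 : H < 1) (ht : 0 ≤ t)
    (hf : MemLp f 2 (volume.restrict (Ioc 0 t))) :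
    IntervalIntegrable (dotKH H f) volume 0 t := by
  simpa only [← dotKH_eq_integral_KHDeriv] using
    intervalIntegrable_volterra ht (integrableOn_volterraIntegrand_KHDeriv hH hH1 hf)

lemma integral_KH_smul_eq_integral_dotKH (hH : 1 / 2 < H) (hH1 : H < 1) (ht : 0 ≤ t)
    (hf : MemLp f 2 (volume.restrict (Ioc 0 t))) :
    ∫ s in 0..t, KH H t s • f s = ∫ r in 0..t, dotKH H f r := by
  rw [intervalIntegral.integral_congr fun s hs => by
    rw [KH_eq_integral_KHDeriv (uIcc_of_le ht ▸ hs).2]]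
  simp only [dotKH_eq_integral_KHDeriv]
  exact integral_volterra_swap ht (integrableOn_volterraIntegrand_KHDeriv hH hH1 hf)

end CameronMartin

/-- Differentiability of elements of the Cameron–Martin space: if `u(t) = ∫_0^t K_H(t,s) uh(s) ds`
with `uh ∈ L²([0,T];ℝⁿ)`, then `u` is absolutely continuous on `[0,T]`, i.e.
`u(t) = ∫_0^t (K̇_H uh)(r) dr` for all `t ∈ [0,T]`, and for almost every `t`,
`u′(t) = (K̇_H uh)(t) = C_H t^{H−1/2} ∫_0^t (t−s)^{H−3/2} s^{1/2−H} uh(s) ds`. -/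
theorem cameronMartin_differentiable
    (H T : ℝ) (n : ℕ) (hH : 1 / 2 < H) (hH1 : H < 1) (hT : 0 < T)
    (uh : ℝ → EuclideanSpace ℝ (Fin n))
    (huh : MemLp uh 2 (volume.restrict (Ioc (0:ℝ) T)))
    (u : ℝ → EuclideanSpace ℝ (Fin n))
    (hu : ∀ t, u t = ∫ s in (0:ℝ)..t, KH H t s • uh s) :
    (∀ t ∈ Icc (0:ℝ) T, u t = ∫ r in (0:ℝ)..t, dotKH H uh r) ∧
    (∀ᵐ t ∂(volume.restrict (Ioo (0:ℝ) T)), HasDerivAt u (dotKH H uh t) t) := by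
  have hmem : ∀ t ∈ Icc 0 T, MemLp uh 2 (volume.restrict (Ioc 0 t)) := fun t ht =>
    huh.mono_measure (Measure.restrict_mono (Ioc_subset_Ioc_right ht.2) le_rfl)
  have hprimitive : ∀ t ∈ Icc 0 T, u t = ∫ r in 0..t, dotKH H uh r := fun t ht =>
    (hu t).trans (integral_KH_smul_eq_integral_dotKH hH hH1 ht.1 (hmem t ht))
  refine ⟨hprimitive, ?_⟩
  have hlebesgue := (intervalIntegrable_dotKH hH hH1 hT.le
    (hmem T ⟨hT.le, le_rfl⟩)).ae_hasDerivAt_integral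
  filter_upwards [ae_restrict_mem measurableSet_Ioo, ae_restrict_of_ae hlebesgue] with x hx hderiv
  refine (hderiv ?_ 0 left_mem_uIcc).congr_of_eventuallyEq ?_
  · rw [uIcc_of_le hT.le]; exact Ioo_subset_Icc_self hx
  · filter_upwards [Ioo_mem_nhds hx.1 hx.2] with y hy using hprimitive y (Ioo_subset_Icc_self hy)
end

section
/- Let a<b, 0<α<1, p>1 with α > 1/p, and f ∈ L^p(a,b). Then there is a constant C>0 depending only on α, p, a, b, and a function F that equals I^α_{a+}f almost everywhere on (a,b), such that |F(x) − F(y)| ≤ C ‖f‖_{L^p(a,b)} |x−y|^{α−1/p} for all x,y ∈ [a,b]; in particular I^α_{a+}f has a Hölder continuous version of exponent α − 1/p. -/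
/-!
For `a ≤ x ≤ y ≤ b`,
`Γ(α) (I f y - I f x) = ∫_x^y (y-t)^(α-1) f t dt - ∫_a^x ((x-t)^(α-1) - (y-t)^(α-1)) f t dt`.
With `q` the conjugate exponent of `p` and `β = (α-1) q + 1 > 0`, both kernels have `L^q`-mass at
most `(y-x)^β / β`; for the second one this is the superadditivity `(A - B)^q + B^q ≤ A^q` of
`u ↦ u^q`, which telescopes the mass to `((x-a)^β - (y-a)^β + (y-x)^β) / β`. Hölder's inequality
then bounds both terms by `β^(-1/q) (y-x)^(β/q) ‖f‖_p`, and `β / q = α - 1/p`. So `I^α_{a+} f`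
is itself Hölder continuous on `[a, b]`.
-/

open MeasureTheory Set

/-- Left-sided Riemann–Liouville fractional integral:
`I^α_{a+} f (x) = (1/Γ(α)) ∫_a^x (x-y)^(α-1) f(y) dy`. -/
noncomputable def fracIntL (a α : ℝ) (f : ℝ → ℝ) (x : ℝ) : ℝ :=
  (1 / Real.Gamma α) * ∫ y in a..x, (x - y) ^ (α - 1) * f y

section Holder

variable {X : Type*} [MeasurableSpace X] {μ : Measure X} {p q : ℝ} {K h g : X → ℝ}

theorem memLp_of_abs_rpow_le (hq : 0 < q) (hK : AEStronglyMeasurable K μ) (hh : Integrable h μ)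
    (hKh : ∀ᵐ t ∂μ, |K t| ^ q ≤ h t) : MemLp K (ENNReal.ofReal q) μ := by
  refine (integrable_norm_rpow_iff hK (by simpa using hq) ENNReal.ofReal_ne_top).1 ?_
  rw [ENNReal.toReal_ofReal hq.le]
  refine hh.mono' (hK.norm.aemeasurable.pow_const q).aestronglyMeasurable ?_
  filter_upwards [hKh] with t ht
  rwa [Real.norm_eq_abs, abs_of_nonneg (by positivity)]

theorem integrable_mul_of_abs_rpow_le (hpq : p.HolderConjugate q)
    (hK : AEStronglyMeasurable K μ) (hh : Integrable h μ) (hKh : ∀ᵐ t ∂μ, |K t| ^ q ≤ h t)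
    (hg : MemLp g (ENNReal.ofReal p) μ) : Integrable (fun t => K t * g t) μ :=
  have : ENNReal.HolderConjugate (ENNReal.ofReal q) (ENNReal.ofReal p) :=
    hpq.symm.ennrealOfReal
  (memLp_of_abs_rpow_le hpq.symm.pos hK hh hKh).integrable_mul hg

theorem abs_integral_mul_le_of_abs_rpow_le (hpq : p.HolderConjugate q)
    (hK : AEStronglyMeasurable K μ) (hh : Integrable h μ) (hKh : ∀ᵐ t ∂μ, |K t| ^ q ≤ h t)
    (hg : MemLp g (ENNReal.ofReal p) μ) :
    |∫ t, K t * g t ∂μ| ≤ (∫ t, h t ∂μ) ^ (1 / q) * (eLpNorm g (ENNReal.ofReal p) μ).toReal := by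
  have hp := hpq.pos
  have hq := hpq.symm.pos
  have hgnorm : (eLpNorm g (ENNReal.ofReal p) μ).toReal = (∫ t, ‖g t‖ ^ p ∂μ) ^ (1 / p) := by
    rw [hg.eLpNorm_eq_integral_rpow_norm (by simpa using hp) ENNReal.ofReal_ne_top,
      ENNReal.toReal_ofReal hp.le, ENNReal.toReal_ofReal (by positivity), one_div]
  have hKq : ∫ t, ‖K t‖ ^ q ∂μ ≤ ∫ t, h t ∂μ := by
    refine integral_mono_of_nonneg (ae_of_all _ fun t => by positivity) hh ?_
    filter_upwards [hKh] with t ht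
    rwa [Real.norm_eq_abs]
  calc |∫ t, K t * g t ∂μ| ≤ ∫ t, ‖K t‖ * ‖g t‖ ∂μ := by
        simpa only [Real.norm_eq_abs, abs_mul] using
          abs_integral_le_integral_abs (f := fun t => K t * g t) (μ := μ)
    _ ≤ (∫ t, ‖K t‖ ^ q ∂μ) ^ (1 / q) * (∫ t, ‖g t‖ ^ p ∂μ) ^ (1 / p) :=
        integral_mul_norm_le_Lp_mul_Lq hpq.symm (memLp_of_abs_rpow_le hpq.symm.pos hK hh hKh) hg
    _ ≤ (∫ t, h t ∂μ) ^ (1 / q) * (eLpNorm g (ENNReal.ofReal p) μ).toReal := by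
        rw [hgnorm]
        gcongr

theorem eLpNorm_toReal_restrict_mono {p : ENNReal} {s t : Set X} (hst : s ⊆ t)
    (hg : MemLp g p (μ.restrict t)) :
    (eLpNorm g p (μ.restrict s)).toReal ≤ (eLpNorm g p (μ.restrict t)).toReal :=
  ENNReal.toReal_mono hg.2.ne (eLpNorm_mono_measure g (Measure.restrict_mono hst le_rfl))

end Holder

section IntervalHolder

variable {p q c d : ℝ} {K h g : ℝ → ℝ}

theorem intervalIntegrable_mul_of_abs_rpow_le (hpq : p.HolderConjugate q) (hcd : c ≤ d)
    (hK : AEStronglyMeasurable K (volume.restrict (Ioo c d))) (hh : IntegrableOn h (Ioo c d))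
    (hKh : ∀ t ∈ Ioo c d, |K t| ^ q ≤ h t)
    (hg : MemLp g (ENNReal.ofReal p) (volume.restrict (Ioo c d))) :
    IntervalIntegrable (fun t => K t * g t) volume c d :=
  (intervalIntegrable_iff_integrableOn_Ioo_of_le hcd).2 <|
    integrable_mul_of_abs_rpow_le hpq hK hh (ae_restrict_of_forall_mem measurableSet_Ioo hKh) hg

theorem abs_intervalIntegral_mul_le_of_abs_rpow_le (hpq : p.HolderConjugate q) (hcd : c ≤ d)
    (hK : AEStronglyMeasurable K (volume.restrict (Ioo c d))) (hh : IntegrableOn h (Ioo c d))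
    (hKh : ∀ t ∈ Ioo c d, |K t| ^ q ≤ h t)
    (hg : MemLp g (ENNReal.ofReal p) (volume.restrict (Ioo c d))) :
    |∫ t in c..d, K t * g t| ≤
      (∫ t in Ioo c d, h t) ^ (1 / q) *
        (eLpNorm g (ENNReal.ofReal p) (volume.restrict (Ioo c d))).toReal := by
  rw [intervalIntegral.integral_of_le hcd, integral_Ioc_eq_integral_Ioo]
  exact abs_integral_mul_le_of_abs_rpow_le hpq hK hh
    (ae_restrict_of_forall_mem measurableSet_Ioo hKh) hg

end IntervalHolder

section Kernel

variable {r s : ℝ}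

theorem aestronglyMeasurable_sub_rpow {μ : Measure ℝ} (z : ℝ) :
    AEStronglyMeasurable (fun t => (z - t) ^ s) μ :=
  (by fun_prop : Measurable fun t : ℝ => (z - t) ^ s).aestronglyMeasurable

theorem integrableOn_Ioo_sub_rpow (hr : -1 < r) {z c d : ℝ} (hcd : c ≤ d) :
    IntegrableOn (fun t => (z - t) ^ r) (Ioo c d) := by
  refine (intervalIntegrable_iff_integrableOn_Ioo_of_le hcd).1 ?_
  simpa using
    (intervalIntegral.intervalIntegrable_rpow' hr (a := z - c) (b := z - d)).comp_sub_left z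

theorem integral_Ioo_sub_rpow (hr : -1 < r) {z c d : ℝ} (hcd : c ≤ d) :
    ∫ t in Ioo c d, (z - t) ^ r = ((z - c) ^ (r + 1) - (z - d) ^ (r + 1)) / (r + 1) := by
  rw [← integral_Ioc_eq_integral_Ioo, ← intervalIntegral.integral_of_le hcd,
    intervalIntegral.integral_comp_sub_left (fun u => u ^ r) z, integral_rpow (Or.inl hr)]

theorem integral_Ioo_sub_rpow_sub_sub_rpow_le (hr : -1 < r) {a x y : ℝ} (hax : a ≤ x)
    (hxy : x ≤ y) :
    ∫ t in Ioo a x, ((x - t) ^ r - (y - t) ^ r) ≤ (y - x) ^ (r + 1) / (r + 1) := by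
  have hr1 : 0 < r + 1 := by linarith
  rw [integral_sub (integrableOn_Ioo_sub_rpow hr hax) (integrableOn_Ioo_sub_rpow hr hax),
    integral_Ioo_sub_rpow hr hax, integral_Ioo_sub_rpow hr hax, sub_self,
    Real.zero_rpow hr1.ne', ← sub_div]
  gcongr
  have : (x - a) ^ (r + 1) ≤ (y - a) ^ (r + 1) := by gcongr
  linarith

theorem abs_sub_rpow_rpow_eq {q z t : ℝ} (ht : t ≤ z) :
    |(z - t) ^ s| ^ q = (z - t) ^ (s * q) := by
  rw [abs_of_nonneg (Real.rpow_nonneg (sub_nonneg.2 ht) s), ← Real.rpow_mul (sub_nonneg.2 ht)]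

theorem abs_rpow_sub_rpow_rpow_le {q u v : ℝ} (hs : s ≤ 0) (hq : 1 ≤ q) (hu : 0 < u)
    (huv : u ≤ v) : |u ^ s - v ^ s| ^ q ≤ u ^ (s * q) - v ^ (s * q) := by
  have hvu : v ^ s ≤ u ^ s := Real.rpow_le_rpow_of_nonpos hu huv hs
  have hv : 0 ≤ v ^ s := Real.rpow_nonneg (hu.le.trans huv) s
  have hsuper := Real.add_rpow_le_rpow_add (sub_nonneg.2 hvu) hv hq
  rw [sub_add_cancel, ← Real.rpow_mul hu.le, ← Real.rpow_mul (hu.le.trans huv)] at hsuper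
  rw [abs_of_nonneg (sub_nonneg.2 hvu)]
  linarith

end Kernel

section KernelHolder

variable {p q s : ℝ} {g : ℝ → ℝ}

theorem intervalIntegrable_sub_rpow_mul (hpq : p.HolderConjugate q) (hsq : -1 < s * q)
    {z c d : ℝ} (hcd : c ≤ d) (hdz : d ≤ z)
    (hg : MemLp g (ENNReal.ofReal p) (volume.restrict (Ioo c d))) :
    IntervalIntegrable (fun t => (z - t) ^ s * g t) volume c d :=
  intervalIntegrable_mul_of_abs_rpow_le hpq hcd (aestronglyMeasurable_sub_rpow z)
    (integrableOn_Ioo_sub_rpow hsq hcd) (fun _ ht => (abs_sub_rpow_rpow_eq (ht.2.le.trans hdz)).le)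
    hg

theorem abs_integral_sub_rpow_mul_le (hpq : p.HolderConjugate q) (hsq : -1 < s * q) {c d : ℝ}
    (hcd : c ≤ d) (hg : MemLp g (ENNReal.ofReal p) (volume.restrict (Ioo c d))) :
    |∫ t in c..d, (d - t) ^ s * g t| ≤
      ((d - c) ^ (s * q + 1) / (s * q + 1)) ^ (1 / q) *
        (eLpNorm g (ENNReal.ofReal p) (volume.restrict (Ioo c d))).toReal := by
  have hmass : ∫ t in Ioo c d, (d - t) ^ (s * q) = (d - c) ^ (s * q + 1) / (s * q + 1) := by
    rw [integral_Ioo_sub_rpow hsq hcd, sub_self, Real.zero_rpow (by linarith), sub_zero]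
  rw [← hmass]
  exact abs_intervalIntegral_mul_le_of_abs_rpow_le hpq hcd (aestronglyMeasurable_sub_rpow d)
    (integrableOn_Ioo_sub_rpow hsq hcd) (fun _ ht => (abs_sub_rpow_rpow_eq ht.2.le).le) hg

theorem abs_integral_sub_rpow_sub_sub_rpow_mul_le (hpq : p.HolderConjugate q) (hs : s ≤ 0)
    (hsq : -1 < s * q) {a x y : ℝ} (hax : a ≤ x) (hxy : x ≤ y)
    (hg : MemLp g (ENNReal.ofReal p) (volume.restrict (Ioo a x))) :
    |∫ t in a..x, ((x - t) ^ s - (y - t) ^ s) * g t| ≤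
      ((y - x) ^ (s * q + 1) / (s * q + 1)) ^ (1 / q) *
        (eLpNorm g (ENNReal.ofReal p) (volume.restrict (Ioo a x))).toReal := by
  have hK : ∀ t ∈ Ioo a x,
      |(x - t) ^ s - (y - t) ^ s| ^ q ≤ (x - t) ^ (s * q) - (y - t) ^ (s * q) :=
    fun t ht => abs_rpow_sub_rpow_rpow_le hs hpq.symm.lt.le (sub_pos.2 ht.2) (by linarith)
  have hmass_nonneg : 0 ≤ ∫ t in Ioo a x, ((x - t) ^ (s * q) - (y - t) ^ (s * q)) :=
    setIntegral_nonneg measurableSet_Ioo fun t ht =>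
      (Real.rpow_nonneg (abs_nonneg _) q).trans (hK t ht)
  refine (abs_intervalIntegral_mul_le_of_abs_rpow_le hpq hax
    ((aestronglyMeasurable_sub_rpow x).sub (aestronglyMeasurable_sub_rpow y))
    ((integrableOn_Ioo_sub_rpow hsq hax).sub (integrableOn_Ioo_sub_rpow hsq hax)) hK hg).trans ?_
  exact mul_le_mul_of_nonneg_right (Real.rpow_le_rpow hmass_nonneg
    (integral_Ioo_sub_rpow_sub_sub_rpow_le hsq hax hxy) (one_div_nonneg.2 hpq.symm.nonneg))
    ENNReal.toReal_nonneg

end KernelHolder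

theorem sub_one_mul_add_one_eq {p q : ℝ} (hpq : p.HolderConjugate q) (α : ℝ) :
    (α - 1) * q + 1 = q * (α - 1 / p) := by
  rw [mul_sub, mul_one_div, hpq.symm.div_conj_eq_sub_one]
  ring

theorem rpow_div_self_rpow_one_div {u β q : ℝ} (hu : 0 ≤ u) (hβ : 0 ≤ β) :
    (u ^ β / β) ^ (1 / q) = β⁻¹ ^ (1 / q) * u ^ (β / q) := by
  rw [div_eq_mul_inv, Real.mul_rpow (by positivity) (inv_nonneg.2 hβ), ← Real.rpow_mul hu,
    mul_one_div, mul_comm]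

theorem fracIntL_sub_fracIntL {a α x y : ℝ} {f : ℝ → ℝ}
    (hx : IntervalIntegrable (fun t => (x - t) ^ (α - 1) * f t) volume a x)
    (hy : IntervalIntegrable (fun t => (y - t) ^ (α - 1) * f t) volume a x)
    (hy' : IntervalIntegrable (fun t => (y - t) ^ (α - 1) * f t) volume x y) :
    fracIntL a α f y - fracIntL a α f x = 1 / Real.Gamma α *
      ((∫ t in x..y, (y - t) ^ (α - 1) * f t) -
        ∫ t in a..x, ((x - t) ^ (α - 1) - (y - t) ^ (α - 1)) * f t) := by
  simp only [fracIntL, sub_mul, intervalIntegral.integral_sub hx hy,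
    ← intervalIntegral.integral_add_adjacent_intervals hy hy']
  ring

theorem abs_fracIntL_sub_le {a b α p q : ℝ} (hpq : p.HolderConjugate q) (hα : α ≤ 1)
    (hαp : 1 / p < α) {f : ℝ → ℝ} (hf : MemLp f (ENNReal.ofReal p) (volume.restrict (Ioo a b)))
    {x y : ℝ} (hax : a ≤ x) (hxy : x ≤ y) (hyb : y ≤ b) :
    |fracIntL a α f y - fracIntL a α f x| ≤
      2 / Real.Gamma α * ((α - 1) * q + 1)⁻¹ ^ (1 / q) *
        (eLpNorm f (ENNReal.ofReal p) (volume.restrict (Ioo a b))).toReal *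
          (y - x) ^ (α - 1 / p) := by
  have hβ_eq := sub_one_mul_add_one_eq hpq α
  have hβ : 0 < (α - 1) * q + 1 := hβ_eq ▸ mul_pos hpq.symm.pos (sub_pos.2 hαp)
  have hsq : -1 < (α - 1) * q := by linarith
  have hΓ : 0 < Real.Gamma α := Real.Gamma_pos_of_pos ((one_div_pos.2 hpq.pos).trans hαp)
  set N := (eLpNorm f (ENNReal.ofReal p) (volume.restrict (Ioo a b))).toReal
  set c := ((α - 1) * q + 1)⁻¹ ^ (1 / q)
  have hscale : ((y - x) ^ ((α - 1) * q + 1) / ((α - 1) * q + 1)) ^ (1 / q) =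
      c * (y - x) ^ (α - 1 / p) := by
    have hexp : ((α - 1) * q + 1) / q = α - 1 / p := by
      rw [hβ_eq, mul_div_cancel_left₀ _ hpq.symm.pos.ne']
    rw [rpow_div_self_rpow_one_div (sub_nonneg.2 hxy) hβ.le, hexp]
  have hax_sub : Ioo a x ⊆ Ioo a b := Ioo_subset_Ioo le_rfl (hxy.trans hyb)
  have hxy_sub : Ioo x y ⊆ Ioo a b := Ioo_subset_Ioo hax hyb
  have hfax := hf.mono_measure (Measure.restrict_mono hax_sub le_rfl)
  have hfxy := hf.mono_measure (Measure.restrict_mono hxy_sub le_rfl)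
  have hnear : |∫ t in x..y, (y - t) ^ (α - 1) * f t| ≤ c * (y - x) ^ (α - 1 / p) * N := by
    refine (abs_integral_sub_rpow_mul_le hpq hsq hxy hfxy).trans ?_
    rw [hscale]
    exact mul_le_mul_of_nonneg_left (eLpNorm_toReal_restrict_mono hxy_sub hf) (by positivity)
  have hfar : |∫ t in a..x, ((x - t) ^ (α - 1) - (y - t) ^ (α - 1)) * f t| ≤
      c * (y - x) ^ (α - 1 / p) * N := by
    refine (abs_integral_sub_rpow_sub_sub_rpow_mul_le hpq (by linarith) hsq hax hxy hfax).trans ?_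
    rw [hscale]
    exact mul_le_mul_of_nonneg_left (eLpNorm_toReal_restrict_mono hax_sub hf) (by positivity)
  rw [fracIntL_sub_fracIntL (intervalIntegrable_sub_rpow_mul hpq hsq hax le_rfl hfax)
    (intervalIntegrable_sub_rpow_mul hpq hsq hax hxy hfax)
    (intervalIntegrable_sub_rpow_mul hpq hsq hxy le_rfl hfxy), abs_mul,
    abs_of_pos (by positivity)]
  calc 1 / Real.Gamma α * |(∫ t in x..y, (y - t) ^ (α - 1) * f t) -
        ∫ t in a..x, ((x - t) ^ (α - 1) - (y - t) ^ (α - 1)) * f t|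
      ≤ 1 / Real.Gamma α * (c * (y - x) ^ (α - 1 / p) * N + c * (y - x) ^ (α - 1 / p) * N) := by
        gcongr
        exact (abs_sub _ _).trans (add_le_add hnear hfar)
    _ = 2 / Real.Gamma α * c * N * (y - x) ^ (α - 1 / p) := by ring

theorem fracIntL_holder_version_general
    (a b α p : ℝ) (hα1 : α < 1) (hp : 1 < p)
    (hαp : 1 / p < α) :
    ∃ C : ℝ, 0 < C ∧ ∀ f : ℝ → ℝ,
      MemLp f (ENNReal.ofReal p) (volume.restrict (Ioo a b)) →
      ∃ F : ℝ → ℝ,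
        (∀ᵐ x ∂(volume.restrict (Ioo a b)), F x = fracIntL a α f x) ∧
        ∀ x ∈ Icc a b, ∀ y ∈ Icc a b,
          |F x - F y| ≤
            C * (eLpNorm f (ENNReal.ofReal p) (volume.restrict (Ioo a b))).toReal *
              |x - y| ^ (α - 1 / p) := by
  set q := p.conjExponent
  have hpq : p.HolderConjugate q := .conjExponent hp
  have hβ : 0 < (α - 1) * q + 1 :=
    sub_one_mul_add_one_eq hpq α ▸ mul_pos hpq.symm.pos (sub_pos.2 hαp)
  have hΓ : 0 < Real.Gamma α := Real.Gamma_pos_of_pos ((one_div_pos.2 hpq.pos).trans hαp)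
  refine ⟨2 / Real.Gamma α * ((α - 1) * q + 1)⁻¹ ^ (1 / q), by positivity,
    fun f hf => ⟨fracIntL a α f, ae_of_all _ fun _ => rfl, fun x hx y hy => ?_⟩⟩
  rcases le_total x y with hxy | hyx
  · rw [abs_sub_comm (fracIntL a α f x), abs_sub_comm x, abs_of_nonneg (sub_nonneg.2 hxy)]
    exact abs_fracIntL_sub_le hpq hα1.le hαp hf hx.1 hxy hy.2
  · rw [abs_of_nonneg (sub_nonneg.2 hyx)]
    exact abs_fracIntL_sub_le hpq hα1.le hαp hf hy.1 hyx hx.2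

/-- If `α > 1/p` then `I^α_{a+} f` has a Hölder continuous version of exponent `α − 1/p`:
there are `C > 0` (depending only on `α, p, a, b`) and, for each `f ∈ L^p(a,b)`, a function `F`
equal to `I^α_{a+} f` a.e. on `(a,b)` with
`|F(x) − F(y)| ≤ C ‖f‖_{L^p(a,b)} |x−y|^{α−1/p}` for all `x, y ∈ [a,b]`. -/
theorem fracIntL_holder_version
    (a b α p : ℝ) (hab : a < b) (hα0 : 0 < α) (hα1 : α < 1) (hp : 1 < p)
    (hαp : 1 / p < α) :
    ∃ C : ℝ, 0 < C ∧ ∀ f : ℝ → ℝ,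
      MemLp f (ENNReal.ofReal p) (volume.restrict (Ioo a b)) →
      ∃ F : ℝ → ℝ,
        (∀ᵐ x ∂(volume.restrict (Ioo a b)), F x = fracIntL a α f x) ∧
        ∀ x ∈ Icc a b, ∀ y ∈ Icc a b,
          |F x - F y| ≤
            C * (eLpNorm f (ENNReal.ofReal p) (volume.restrict (Ioo a b))).toReal *
              |x - y| ^ (α - 1 / p) :=
  fracIntL_holder_version_general a b α p hα1 hp hαp
end

section
/- (Bihari's inequality) Let κ : [0,∞) → [0,∞) be continuous and non-decreasing with κ(u)>0 for u>0, and define G(v) = ∫_1^v ds/κ(s) for v>0 (so G is strictly increasing with inverse G⁻¹ on its range). Let T>0, C ≥ 0, ε₁ > 0, and let Z : [0,T] → [0,∞) be continuous with Z(t) ≤ ε₁ + C ∫_0^t κ(Z(s)) ds for all t ∈ [0,T]. If G(ε₁) + C T < lim_{v→∞} G(v), then Z(t) ≤ G⁻¹( G(ε₁) + C t ) for all t ∈ [0,T]. -/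
open Set MeasureTheory intervalIntegral Topology

/-! The majorant `W t = ε₁ + C ∫₀ᵗ κ (Z s) ds` dominates `Z`, so by monotonicity of `κ` it solves
the differential inequality `W' = C κ (Z) ≤ C κ (W)`. Since `G' = 1 / κ`, this says exactly that
`(G ∘ W)' ≤ C`, hence `G (W t) ≤ G ε₁ + C t`. The right-hand side lies between `G ε₁` and a value
of `G`, so it is attained by the continuous increasing `G`, and inverting `G` gives
`Z t ≤ W t ≤ G⁻¹ (G ε₁ + C t)`. -/

theorem hasDerivAt_integral_of_continuousOn {f : ℝ → ℝ} {s : Set ℝ} (hf : ContinuousOn f s)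
    {a b : ℝ} (hab : uIcc a b ⊆ s) (hs : s ∈ 𝓝 b) :
    HasDerivAt (fun x => ∫ y in a..x, f y) (f b) b :=
  integral_hasDerivAt_right (hf.mono hab).intervalIntegrable
    ((hf.mono interior_subset).stronglyMeasurableAtFilter isOpen_interior b
      (mem_interior_iff_mem_nhds.2 hs))
    (hf.continuousAt hs)

theorem StrictMonoOn.le_invFunOn {α β : Type*} [LinearOrder α] [Preorder β] [Nonempty α]
    {G : α → β} {s : Set α} (hG : StrictMonoOn G s) {x : α} {y : β} (hy : y ∈ G '' s)
    (hx : x ∈ s) (hxy : G x ≤ y) : x ≤ Function.invFunOn G s y := by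
  have hex : ∃ z ∈ s, G z = y := hy
  rwa [← hG.le_iff_le hx (Function.invFunOn_mem hex), Function.invFunOn_eq hex]

section Bihari

variable {κ G : ℝ → ℝ}

theorem hasDerivAt_of_eq_integral_one_div (hκ : ContinuousOn κ (Ioi 0))
    (hpos : ∀ u, 0 < u → 0 < κ u) {a : ℝ} (ha : 0 < a)
    (hG : ∀ v, 0 < v → G v = ∫ s in a..v, 1 / κ s) {w : ℝ} (hw : 0 < w) :
    HasDerivAt G (1 / κ w) w := by
  have hinv : ContinuousOn (fun s => 1 / κ s) (Ioi 0) :=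
    continuousOn_const.div hκ fun u hu => (hpos u hu).ne'
  have hsub : uIcc a w ⊆ Ioi 0 := fun x hx => (lt_min ha hw).trans_le hx.1
  refine (hasDerivAt_integral_of_continuousOn hinv hsub (Ioi_mem_nhds hw)).congr_of_eventuallyEq ?_
  filter_upwards [Ioi_mem_nhds hw] with v hv using hG v hv

theorem strictMonoOn_of_hasDerivAt_one_div (hpos : ∀ u, 0 < u → 0 < κ u)
    (hG : ∀ w, 0 < w → HasDerivAt G (1 / κ w) w) : StrictMonoOn G (Ioi 0) :=
  strictMonoOn_of_deriv_pos (convex_Ioi 0)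
    (fun w hw => (hG w hw).continuousAt.continuousWithinAt) fun w hw => by
      rw [interior_Ioi] at hw
      rw [(hG w hw).deriv]
      exact one_div_pos.2 (hpos w hw)

theorem comp_sub_le_mul_sub_of_hasDerivAt_le {W W' : ℝ → ℝ} {a b C : ℝ}
    (hG : ∀ w, 0 < w → HasDerivAt G (1 / κ w) w) (hpos : ∀ u, 0 < u → 0 < κ u)
    (hW : ContinuousOn W (Icc a b)) (hWpos : ∀ t ∈ Icc a b, 0 < W t)
    (hW' : ∀ t ∈ Ioo a b, HasDerivAt W (W' t) t)
    (hW'le : ∀ t ∈ Ioo a b, W' t ≤ C * κ (W t)) {t : ℝ} (ht : t ∈ Icc a b) :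
    G (W t) - G (W a) ≤ C * (t - a) := by
  have hGW : ∀ t ∈ Ioo a b, HasDerivAt (G ∘ W) (1 / κ (W t) * W' t) t :=
    fun t ht => (hG _ (hWpos t (Ioo_subset_Icc_self ht))).comp t (hW' t ht)
  have hGcont : ContinuousOn G (Ioi 0) := fun w hw => (hG w hw).continuousAt.continuousWithinAt
  refine (convex_Icc a b).image_sub_le_mul_sub_of_deriv_le (hGcont.comp hW hWpos) ?_ ?_
    a (left_mem_Icc.2 (ht.1.trans ht.2)) t ht ht.1 <;> rw [interior_Icc]
  · exact fun t ht => (hGW t ht).differentiableAt.differentiableWithinAt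
  · intro t ht
    rw [(hGW t ht).deriv, one_div, inv_mul_le_iff₀ (hpos _ (hWpos t (Ioo_subset_Icc_self ht))),
      mul_comm]
    exact hW'le t ht

noncomputable def bihariMajorant (κ Z : ℝ → ℝ) (ε C t : ℝ) : ℝ := ε + C * ∫ s in (0:ℝ)..t, κ (Z s)

variable {Z : ℝ → ℝ} {T C ε : ℝ}

theorem self_le_bihariMajorant (hnonneg : ∀ u, 0 ≤ u → 0 ≤ κ u) (hC : 0 ≤ C)
    (hZnonneg : ∀ t ∈ Icc 0 T, 0 ≤ Z t) {t : ℝ} (ht : t ∈ Icc 0 T) :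
    ε ≤ bihariMajorant κ Z ε C t :=
  le_add_of_nonneg_right <| mul_nonneg hC <| integral_nonneg ht.1 fun s hs =>
    hnonneg _ (hZnonneg s ⟨hs.1, hs.2.trans ht.2⟩)

theorem continuousOn_bihariMajorant (hκZ : ContinuousOn (fun s => κ (Z s)) (Icc 0 T))
    (hT : 0 ≤ T) : ContinuousOn (bihariMajorant κ Z ε C) (Icc 0 T) := by
  have hprim := continuousOn_primitive_interval' (hκZ.intervalIntegrable_of_Icc (μ := volume) hT)
    left_mem_uIcc
  exact continuousOn_const.add (continuousOn_const.mul (hprim.mono Icc_subset_uIcc))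

theorem hasDerivAt_bihariMajorant (hκZ : ContinuousOn (fun s => κ (Z s)) (Icc 0 T)) {t : ℝ}
    (ht : t ∈ Ioo 0 T) : HasDerivAt (bihariMajorant κ Z ε C) (C * κ (Z t)) t := by
  have hsub : uIcc 0 t ⊆ Icc 0 T :=
    uIcc_subset_Icc (left_mem_Icc.2 (ht.1.trans ht.2).le) (Ioo_subset_Icc_self ht)
  exact ((hasDerivAt_integral_of_continuousOn hκZ hsub (Icc_mem_nhds ht.1 ht.2)).const_mul
    C).const_add ε

theorem comp_bihariMajorant_le (hcont : ContinuousOn κ (Ici 0)) (hmono : MonotoneOn κ (Ici 0))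
    (hnonneg : ∀ u, 0 ≤ u → 0 ≤ κ u) (hpos : ∀ u, 0 < u → 0 < κ u)
    (hG : ∀ w, 0 < w → HasDerivAt G (1 / κ w) w) (hC : 0 ≤ C) (hε : 0 < ε)
    (hZcont : ContinuousOn Z (Icc 0 T)) (hZnonneg : ∀ t ∈ Icc 0 T, 0 ≤ Z t)
    (hZ : ∀ t ∈ Icc 0 T, Z t ≤ bihariMajorant κ Z ε C t) {t : ℝ} (ht : t ∈ Icc 0 T) :
    G (bihariMajorant κ Z ε C t) ≤ G ε + C * t := by
  have hκZ : ContinuousOn (fun s => κ (Z s)) (Icc 0 T) := hcont.comp hZcont hZnonneg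
  have hWpos : ∀ t ∈ Icc 0 T, 0 < bihariMajorant κ Z ε C t := fun t ht =>
    hε.trans_le (self_le_bihariMajorant hnonneg hC hZnonneg ht)
  have hW'le : ∀ t ∈ Ioo 0 T, C * κ (Z t) ≤ C * κ (bihariMajorant κ Z ε C t) := fun t ht =>
    have ht' := Ioo_subset_Icc_self ht
    mul_le_mul_of_nonneg_left (hmono (hZnonneg t ht') (hWpos t ht').le (hZ t ht')) hC
  have hgrowth := comp_sub_le_mul_sub_of_hasDerivAt_le hG hpos
    (continuousOn_bihariMajorant hκZ (ht.1.trans ht.2)) hWpos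
    (fun t ht => hasDerivAt_bihariMajorant hκZ ht) hW'le ht
  simp only [bihariMajorant, integral_same, mul_zero, add_zero, sub_zero] at hgrowth ⊢
  linarith

end Bihari

theorem bihari_inequality_general
    (κ : ℝ → ℝ)
    (hcont : ContinuousOn κ (Ici 0))
    (hmono : MonotoneOn κ (Ici 0))
    (hnonneg : ∀ u : ℝ, 0 ≤ u → 0 ≤ κ u)
    (hpos : ∀ u : ℝ, 0 < u → 0 < κ u)
    (G : ℝ → ℝ) (hG : ∀ v : ℝ, 0 < v → G v = ∫ s in (1:ℝ)..v, 1 / κ s)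
    (T C ε₁ : ℝ) (hC : 0 ≤ C) (hε : 0 < ε₁)
    (Z : ℝ → ℝ)
    (hZcont : ContinuousOn Z (Icc 0 T))
    (hZnonneg : ∀ t ∈ Icc (0:ℝ) T, 0 ≤ Z t)
    (hZ : ∀ t ∈ Icc (0:ℝ) T, Z t ≤ ε₁ + C * ∫ s in (0:ℝ)..t, κ (Z s))
    (hlim : ∃ v : ℝ, 0 < v ∧ G ε₁ + C * T < G v) :
    ∀ t ∈ Icc (0:ℝ) T, Z t ≤ Function.invFunOn G (Ioi 0) (G ε₁ + C * t) := by
  intro t ht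
  have hG' : ∀ w, 0 < w → HasDerivAt G (1 / κ w) w := fun w hw =>
    hasDerivAt_of_eq_integral_one_div (hcont.mono Ioi_subset_Ici_self) hpos one_pos hG hw
  have hGmono := strictMonoOn_of_hasDerivAt_one_div hpos hG'
  obtain ⟨v, hv, hGv⟩ := hlim
  have hge : G ε₁ ≤ G ε₁ + C * t := le_add_of_nonneg_right (mul_nonneg hC ht.1)
  have hlt : G ε₁ + C * t < G v := by linarith [mul_le_mul_of_nonneg_left ht.2 hC]
  have hεv : ε₁ ≤ v := ((hGmono.lt_iff_lt hε hv).1 (hge.trans_lt hlt)).le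
  have hattained : G ε₁ + C * t ∈ G '' Ioi 0 := by
    have hGcont : ContinuousOn G (Icc ε₁ v) := fun w hw =>
      (hG' w (hε.trans_le hw.1)).continuousAt.continuousWithinAt
    obtain ⟨u, hu, hGu⟩ := intermediate_value_Icc hεv hGcont ⟨hge, hlt.le⟩
    exact ⟨u, hε.trans_le hu.1, hGu⟩
  have hWpos : 0 < bihariMajorant κ Z ε₁ C t :=
    hε.trans_le (self_le_bihariMajorant hnonneg hC hZnonneg ht)
  exact (hZ t ht).trans (hGmono.le_invFunOn hattained hWpos
    (comp_bihariMajorant_le hcont hmono hnonneg hpos hG' hC hε hZcont hZnonneg hZ ht))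

/-- Bihari's inequality. Let `κ : [0,∞) → [0,∞)` be continuous and non-decreasing with
`κ(u) > 0` for `u > 0`, and let `G(v) = ∫_1^v ds/κ(s)` for `v > 0`.  If `Z : [0,T] → [0,∞)`
is continuous with `Z(t) ≤ ε₁ + C ∫_0^t κ(Z(s)) ds` on `[0,T]` and
`G(ε₁) + C T < lim_{v→∞} G(v)` (i.e. `G(ε₁) + C T` is below some value of `G`), then
`Z(t) ≤ G⁻¹(G(ε₁) + C t)` for all `t ∈ [0,T]`, where `G⁻¹` is the inverse of `G` on `(0,∞)`. -/
theorem bihari_inequality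
    (κ : ℝ → ℝ)
    (hcont : ContinuousOn κ (Ici 0))
    (hmono : MonotoneOn κ (Ici 0))
    (hnonneg : ∀ u : ℝ, 0 ≤ u → 0 ≤ κ u)
    (hpos : ∀ u : ℝ, 0 < u → 0 < κ u)
    (G : ℝ → ℝ) (hG : ∀ v : ℝ, 0 < v → G v = ∫ s in (1:ℝ)..v, 1 / κ s)
    (T C ε₁ : ℝ) (hT : 0 < T) (hC : 0 ≤ C) (hε : 0 < ε₁)
    (Z : ℝ → ℝ)
    (hZcont : ContinuousOn Z (Icc 0 T))
    (hZnonneg : ∀ t ∈ Icc (0:ℝ) T, 0 ≤ Z t)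
    (hZ : ∀ t ∈ Icc (0:ℝ) T, Z t ≤ ε₁ + C * ∫ s in (0:ℝ)..t, κ (Z s))
    (hlim : ∃ v : ℝ, 0 < v ∧ G ε₁ + C * T < G v) :
    ∀ t ∈ Icc (0:ℝ) T, Z t ≤ Function.invFunOn G (Ioi 0) (G ε₁ + C * t) :=
  bihari_inequality_general κ hcont hmono hnonneg hpos G hG T C ε₁ hC hε Z hZcont hZnonneg hZ hlim
end
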